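/- arXiv:0912.3958 — 4 statements merged into one kernel-verified Lean document; each statement's English description precedes it below -/
import Mathlib

section
/- For α = 0 and any σ ∈ (0,2π), the complex expression β̂±,ₖ = (1/2)·(1−e^{−2kσ})·Re[ (1+ik)(1 ± e^{−(k−2i)σ}) / ((1 ± e^{−kσ})(1 − e^{−2(k−i)σ}) ) ] equals the real expression (1/2)·(cosh²(kσ) − cos²σ ∓ cosh(kσ)sin²σ ∓ k·sinσ·cosσ·sinh(kσ)) / (cosh²(kσ) − cos²σ), for every real k > 0. -/
/-!
Put `q = exp (-x)` and `w = exp (σ i)`. Since `‖w‖ = 1`, conjugation inverts `w`, so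
`Re Z = (Z + conj Z) / 2` turns the left side into a rational function of `q`, `w`, `k` and `i`;
so does the right side, because `cosh`, `sinh`, `cos` and `sin` are Laurent polynomials in `q`
and `w`. The denominators `1 ± q`, `1 - q²w²` and `w² - q²` do not vanish because `q ≠ 1 = ‖w‖`,
and what remains after clearing them is a polynomial identity.
-/

open Complex ComplexConjugate

theorem Real.cos_sq_lt_cosh_sq {x : ℝ} (hx : x ≠ 0) (σ : ℝ) :
    Real.cos σ ^ 2 < Real.cosh x ^ 2 := by
  have := Real.one_lt_cosh.2 hx
  nlinarith [Real.cos_sq_le_one σ]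

theorem norm_ofReal_sq_ne_one {q : ℝ} (hq : 0 < q) (hq1 : q ≠ 1) : ‖(q : ℂ) ^ 2‖ ≠ 1 := by
  rw [norm_pow, norm_real, Real.norm_of_nonneg hq.le, Ne,
    pow_eq_one_iff_of_nonneg hq.le two_ne_zero]
  exact hq1

theorem one_sub_sq_mul_sq_ne_zero {q : ℝ} (hq : 0 < q) (hq1 : q ≠ 1) {w : ℂ} (hw : ‖w‖ = 1) :
    (1 - q ^ 2 * w ^ 2 : ℂ) ≠ 0 :=
  sub_ne_zero.2 <| ne_of_apply_ne norm <| by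
    simpa [hw] using (norm_ofReal_sq_ne_one hq hq1).symm

theorem sq_sub_sq_ne_zero {q : ℝ} (hq : 0 < q) (hq1 : q ≠ 1) {w : ℂ} (hw : ‖w‖ = 1) :
    (w ^ 2 - q ^ 2 : ℂ) ≠ 0 :=
  sub_ne_zero.2 <| ne_of_apply_ne norm <| by
    rw [norm_pow, hw, one_pow, ne_comm]; exact norm_ofReal_sq_ne_one hq hq1

theorem re_betaHat_eq (x σ k ε : ℝ) (hx : x ≠ 0) (hε : ε = 1 ∨ ε = -1) :
    (1 / 2) * (1 - Real.exp (-2 * x)) *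
      ((1 + I * k) * (1 + ε * exp (-x + 2 * σ * I)) /
        ((1 + ε * exp (-x)) * (1 - exp (-2 * x + 2 * σ * I)))).re
    = (1 / 2) * (Real.cosh x ^ 2 - Real.cos σ ^ 2 - ε * Real.cosh x * Real.sin σ ^ 2
          - ε * k * Real.sin σ * Real.cos σ * Real.sinh x) /
      (Real.cosh x ^ 2 - Real.cos σ ^ 2) := by
  set q := Real.exp (-x) with hq_def
  set w := exp (σ * I) with hw_def
  have hq : 0 < q := Real.exp_pos _
  have hq1 : q ≠ 1 := by simpa [hq_def] using hx
  have hw : w ≠ 0 := exp_ne_zero _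
  have hnorm : ‖w‖ = 1 := norm_exp_ofReal_mul_I σ
  have hq0 : (q : ℂ) ≠ 0 := ofReal_ne_zero.2 hq.ne'
  have hden₁ : (1 + ε * q : ℂ) ≠ 0 := by
    norm_cast
    rcases hε with rfl | rfl
    · positivity
    · rw [neg_one_mul, ← sub_eq_add_neg]
      exact sub_ne_zero.2 hq1.symm
  have hden₂ := one_sub_sq_mul_sq_ne_zero hq hq1 hnorm
  have hden₃ := sq_sub_sq_ne_zero hq hq1 hnorm
  have e₁ : exp (-x + 2 * σ * I) = q * w ^ 2 := by
    rw [exp_add, ← exp_nat_mul, hq_def, ofReal_exp]; push_cast; ring_nf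
  have e₂ : exp (-2 * x + 2 * σ * I) = q ^ 2 * w ^ 2 := by
    rw [exp_add, ← exp_nat_mul, ← ofReal_pow, hq_def, ← Real.exp_nat_mul, ofReal_exp]
    push_cast; ring_nf
  have e₃ : exp (-x) = q := by rw [hq_def, ofReal_exp]; push_cast; ring_nf
  have e₄ : Real.exp (-2 * x) = q ^ 2 := by rw [hq_def, ← Real.exp_nat_mul]; ring_nf
  have hcos : cos σ = (w + w⁻¹) / 2 := by rw [cos, hw_def, ← exp_neg]; ring_nf
  have hsin : sin σ = (w⁻¹ - w) * I / 2 := by rw [sin, hw_def, ← exp_neg]; ring_nf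
  have hcosh : cosh x = ((q : ℂ)⁻¹ + q) / 2 := by
    rw [← ofReal_cosh, Real.cosh_eq, hq_def, Real.exp_neg]; push_cast [inv_inv]; ring
  have hsinh : sinh x = ((q : ℂ)⁻¹ - q) / 2 := by
    rw [← ofReal_sinh, Real.sinh_eq, hq_def, Real.exp_neg]; push_cast [inv_inv]; ring
  -- With `sin σ ^ 2` eliminated, `I` occurs only linearly, so `ring` never needs `I ^ 2 = -1`.
  rw [e₄, Real.sin_sq, eq_div_iff (sub_pos.2 (Real.cos_sq_lt_cosh_sq hx σ)).ne']
  apply ofReal_injective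
  push_cast
  rw [re_eq_add_conj, e₁, e₂, e₃]
  simp only [map_div₀, map_mul, map_add, map_sub, map_one, conj_ofReal, conj_I, map_pow,
    ← inv_eq_conj hnorm]
  rw [hcos, hsin, hcosh, hsinh]
  rcases hε with rfl | rfl <;>
    simp only [ofReal_one, ofReal_neg, one_mul, neg_one_mul, ← sub_eq_add_neg] at hden₁ ⊢ <;>
    field_simp <;> ring

/-- For α = 0 and σ ∈ (0,2π), the complex formula for the per-mode optimal constant β̂±,ₖ
equals the manifestly real expression.  The sign ε = ±1 encodes the `±` subscript,
and `∓` on the right-hand side becomes `- ε * ⬝`. -/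
theorem stmt1 (σ k ε : ℝ) (hσ : σ ∈ Set.Ioo 0 (2 * Real.pi)) (hk : 0 < k)
    (hε : ε = 1 ∨ ε = -1) :
    (1 / 2) * (1 - Real.exp (-2 * k * σ)) *
      ((1 + Complex.I * (k : ℂ)) *
          (1 + (ε : ℂ) * Complex.exp (-((k : ℂ) - 2 * Complex.I) * (σ : ℂ))) /
        ((1 + (ε : ℂ) * Complex.exp (-(k : ℂ) * (σ : ℂ))) *
          (1 - Complex.exp (-2 * ((k : ℂ) - Complex.I) * (σ : ℂ))))).re
    = (1 / 2) *
        (Real.cosh (k * σ) ^ 2 - Real.cos σ ^ 2 - ε * Real.cosh (k * σ) * Real.sin σ ^ 2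
          - ε * k * Real.sin σ * Real.cos σ * Real.sinh (k * σ)) /
      (Real.cosh (k * σ) ^ 2 - Real.cos σ ^ 2) := by
  have h₁ : -((k : ℂ) - 2 * I) * σ = -((k * σ : ℝ) : ℂ) + 2 * σ * I := by push_cast; ring
  have h₂ : -(k : ℂ) * σ = -((k * σ : ℝ) : ℂ) := by push_cast; ring
  have h₃ : -2 * ((k : ℂ) - I) * σ = -2 * ((k * σ : ℝ) : ℂ) + 2 * σ * I := by
    push_cast; ring
  rw [h₁, h₂, h₃, mul_assoc (-2) k σ]
  exact re_betaHat_eq (k * σ) σ k ε (mul_pos hk hσ.1).ne' hε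
end

section
/- Fix σ ∈ (0,2π) and a real α ≠ 1. Then β̂±,ₖ = ((k²+α²)/(2k²(1−α)))·(1−e^{−2kσ})·Re[ (1−α+ik)(1 ± e^{−(k+iα−2i)σ}) / ((1 ± e^{−(k−iα)σ})(1 − e^{−2(k+iα−i)σ}) ) ] tends to 1/2 as k → +∞. -/
/-!
With `u = e^{-kσ}`, every exponential in the complex fraction has modulus `u` or `u²`, so the
fraction equals `(1 - α + i k) (1 + O(u))`. Since `k u → 0`, its real part tends to
`Re (1 - α + i k) = 1 - α`, while the real prefactor tends to `1 / (2 (1 - α))`.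
-/

open Filter Topology Complex

lemma tendsto_ofReal_mul_cexp_neg_mul_add {b : ℝ} (hb : 0 < b) (a : ℂ) :
    Tendsto (fun k : ℝ => (k : ℂ) * cexp (-(k : ℂ) * b + a)) atTop (𝓝 0) := by
  rw [tendsto_zero_iff_norm_tendsto_zero]
  have h := (tendsto_rpow_mul_exp_neg_mul_atTop_nhds_zero 1 b hb).mul_const (Real.exp a.re)
  rw [zero_mul] at h
  refine h.congr' ?_
  filter_upwards [eventually_ge_atTop 0] with k hk
  simp [norm_exp, Real.exp_add, abs_of_nonneg hk, mul_comm b k, mul_assoc]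

lemma tendsto_zero_of_tendsto_ofReal_mul {f : ℝ → ℂ}
    (hf : Tendsto (fun k : ℝ => (k : ℂ) * f k) atTop (𝓝 0)) :
    Tendsto f atTop (𝓝 0) := by
  have hinv : Tendsto (fun k : ℝ => ((k⁻¹ : ℝ) : ℂ)) atTop (𝓝 0) := by
    rw [← ofReal_zero]
    exact (continuous_ofReal.tendsto 0).comp tendsto_inv_atTop_zero
  have h := hinv.mul hf
  rw [zero_mul] at h
  refine h.congr' ?_
  filter_upwards [eventually_ne_atTop 0] with k hk
  rw [← mul_assoc, ofReal_inv, inv_mul_cancel₀ (ofReal_ne_zero.mpr hk), one_mul]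

lemma tendsto_ofReal_mul_div_mul_sub_one {a b c : ℝ → ℂ}
    (ha : Tendsto (fun k : ℝ => (k : ℂ) * a k) atTop (𝓝 0))
    (hb : Tendsto (fun k : ℝ => (k : ℂ) * b k) atTop (𝓝 0))
    (hc : Tendsto (fun k : ℝ => (k : ℂ) * c k) atTop (𝓝 0)) :
    Tendsto (fun k : ℝ => (k : ℂ) * ((1 + a k) / ((1 + b k) * (1 - c k)) - 1))
      atTop (𝓝 0) := by
  have hb0 := tendsto_zero_of_tendsto_ofReal_mul hb
  have hc0 := tendsto_zero_of_tendsto_ofReal_mul hc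
  have hden : Tendsto (fun k => (1 + b k) * (1 - c k)) atTop (𝓝 1) := by
    simpa using (hb0.const_add 1).mul (hc0.const_sub 1)
  have hnum : Tendsto (fun k : ℝ => (k : ℂ) * a k - (k : ℂ) * b k + (k : ℂ) * c k
      + b k * ((k : ℂ) * c k)) atTop (𝓝 0) := by
    simpa using ((ha.sub hb).add hc).add (hb0.mul hc)
  have h := hnum.div hden one_ne_zero
  rw [zero_div] at h
  refine h.congr' ?_
  filter_upwards [hden.eventually_ne one_ne_zero] with k hk
  rw [Pi.div_apply, div_sub_one hk, ← mul_div_assoc]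
  congr 1
  ring

lemma tendsto_add_mul_ofReal_mul {h : ℝ → ℂ} (z w : ℂ)
    (hh : Tendsto (fun k : ℝ => (k : ℂ) * h k) atTop (𝓝 0)) :
    Tendsto (fun k : ℝ => (z + w * k) * h k) atTop (𝓝 0) := by
  have h' := ((tendsto_zero_of_tendsto_ofReal_mul hh).const_mul z).add (hh.const_mul w)
  simp only [mul_zero, add_zero] at h'
  exact h'.congr fun k => by ring

lemma tendsto_beta_prefactor {σ α : ℝ} (hσ : 0 < σ) (hα : α ≠ 1) :
    Tendsto (fun k : ℝ => ((k ^ 2 + α ^ 2) / (2 * k ^ 2 * (1 - α))) *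
      (1 - Real.exp (-2 * k * σ))) atTop (𝓝 (1 / (2 * (1 - α)))) := by
  have hα' : 1 - α ≠ 0 := sub_ne_zero.mpr hα.symm
  have hinv : Tendsto (fun k : ℝ => (k ^ 2)⁻¹) atTop (𝓝 0) :=
    tendsto_inv_atTop_zero.comp (tendsto_pow_atTop two_ne_zero)
  have hexp : Tendsto (fun k : ℝ => Real.exp (-2 * k * σ)) atTop (𝓝 0) :=
    Real.tendsto_exp_neg_atTop_nhds_zero.comp
      (tendsto_id.const_mul_atTop (by positivity : 0 < 2 * σ))
      |>.congr fun k => by simp only [Function.comp_apply, id]; ring_nf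
  have h := (((hinv.const_mul (α ^ 2)).const_add 1).div_const (2 * (1 - α))).mul
    (hexp.const_sub 1)
  simp only [mul_zero, add_zero, sub_zero, mul_one] at h
  refine h.congr' ?_
  filter_upwards [eventually_ne_atTop 0] with k hk
  field_simp

theorem stmt2_general (σ α : ℝ) (hσ : σ ∈ Set.Ioo 0 (2 * Real.pi)) (hα : α ≠ 1)
    (ε : ℂ) :
    Filter.Tendsto (fun k : ℝ =>
      ((k ^ 2 + α ^ 2) / (2 * k ^ 2 * (1 - α))) * (1 - Real.exp (-2 * k * σ)) *
        ((1 - (α : ℂ) + Complex.I * (k : ℂ)) *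
            (1 + ε * Complex.exp (-((k : ℂ) + Complex.I * (α : ℂ) - 2 * Complex.I) * (σ : ℂ))) /
          ((1 + ε * Complex.exp (-((k : ℂ) - Complex.I * (α : ℂ)) * (σ : ℂ))) *
            (1 - Complex.exp (-2 * ((k : ℂ) + Complex.I * (α : ℂ) - Complex.I) * (σ : ℂ))))).re)
      Filter.atTop (nhds (1 / 2)) := by
  have hσ0 : 0 < σ := hσ.1
  have hE1 : Tendsto (fun k : ℝ => (k : ℂ) * (ε * cexp (-((k : ℂ) + I * α - 2 * I) * σ)))
      atTop (𝓝 0) := by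
    have h := (tendsto_ofReal_mul_cexp_neg_mul_add hσ0 (-(I * α - 2 * I) * σ)).const_mul ε
    rw [mul_zero] at h
    exact h.congr fun k => by ring_nf
  have hE2 : Tendsto (fun k : ℝ => (k : ℂ) * (ε * cexp (-((k : ℂ) - I * α) * σ)))
      atTop (𝓝 0) := by
    have h := (tendsto_ofReal_mul_cexp_neg_mul_add hσ0 (I * α * σ)).const_mul ε
    rw [mul_zero] at h
    exact h.congr fun k => by ring_nf
  have hE3 : Tendsto (fun k : ℝ => (k : ℂ) * cexp (-2 * ((k : ℂ) + I * α - I) * σ))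
      atTop (𝓝 0) :=
    (tendsto_ofReal_mul_cexp_neg_mul_add (by positivity : 0 < 2 * σ)
      (-2 * (I * α - I) * σ)).congr fun k => by push_cast; ring_nf
  have hrem :=
    tendsto_add_mul_ofReal_mul (1 - α) I (tendsto_ofReal_mul_div_mul_sub_one hE1 hE2 hE3)
  have hre := ((continuous_re.tendsto 0).comp hrem).const_add (1 - α)
  rw [zero_re, add_zero] at hre
  have h := (tendsto_beta_prefactor hσ0 hα).mul hre
  rw [one_div_mul_eq_div, div_mul_cancel_right₀ (sub_ne_zero.mpr hα.symm)] at h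
  rw [one_div]
  refine h.congr fun k => ?_
  congr 1
  simp [mul_div_assoc, mul_sub]

/-- For fixed σ ∈ (0,2π) and α ≠ 1, the per-mode optimal constant β̂±,ₖ tends to 1/2
as k → +∞.  The sign ε = ±1 encodes the `±` subscript. -/
theorem stmt2 (σ α : ℝ) (hσ : σ ∈ Set.Ioo 0 (2 * Real.pi)) (hα : α ≠ 1)
    (ε : ℂ) (hε : ε = 1 ∨ ε = -1) :
    Filter.Tendsto (fun k : ℝ =>
      ((k ^ 2 + α ^ 2) / (2 * k ^ 2 * (1 - α))) * (1 - Real.exp (-2 * k * σ)) *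
        ((1 - (α : ℂ) + Complex.I * (k : ℂ)) *
            (1 + ε * Complex.exp (-((k : ℂ) + Complex.I * (α : ℂ) - 2 * Complex.I) * (σ : ℂ))) /
          ((1 + ε * Complex.exp (-((k : ℂ) - Complex.I * (α : ℂ)) * (σ : ℂ))) *
            (1 - Complex.exp (-2 * ((k : ℂ) + Complex.I * (α : ℂ) - Complex.I) * (σ : ℂ))))).re)
      Filter.atTop (nhds (1 / 2)) :=
  stmt2_general σ α hσ hα ε
end

section
/- Define, for σ ∈ (0,2π) and real α with α ≠ 1, α ≠ 0, ασ ∉ πℤ, and (1−α)σ ∉ πℤ: β̂₊,₀(α) = α²·ψ₃ / (2(1−cos(ασ))(1−cos(2(1−α)σ))), where ψ₃ = 2σ² − σ²(cos(ασ) + cos((2−α)σ)) − (σ/(1−α))·(sin((2−2α)σ) − (sin((2−α)σ) − sin(ασ))). Then β̂₊,₀ extends continuously to α = 0 with value 1, and its derivative with respect to α at α = 0 equals σ·cot σ − 1 (for σ with sin σ ≠ 0). -/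
/-- The limiting per-mode constant β̂₊,₀ as a function of the weight exponent α,
extended by the value 1 at α = 0. -/
noncomputable def betaPlusZero (σ : ℝ) : ℝ → ℝ := fun α =>
  if α = 0 then 1 else
    α ^ 2 *
        (2 * σ ^ 2 - σ ^ 2 * (Real.cos (α * σ) + Real.cos ((2 - α) * σ))
          - (σ / (1 - α)) *
            (Real.sin ((2 - 2 * α) * σ) - (Real.sin ((2 - α) * σ) - Real.sin (α * σ)))) /
      (2 * (1 - Real.cos (α * σ)) * (1 - Real.cos (2 * (1 - α) * σ)))

/-!
Absorb the factor `α²` into the denominator via `(1 - cos (ασ)) / α² = σ² q (ασ)`, where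
`q x = (1 - cos x) / x²` is extended by `1/2` at `0`. Then `β̂₊,₀ = N / D` on all of `ℝ`, with `N = ψ₃`
and `D` both differentiable at `0` and `N 0 = D 0 = σ² (1 - cos 2σ) = 2 σ² sin² σ ≠ 0`. Since
`q x = 1/2 + O(x²)`, `q' 0 = 0`, and the quotient rule gives `(N' 0 - D' 0) / D 0 = σ cot σ - 1`.
-/

open Real Filter Asymptotics

noncomputable def oneSubCosDivSq (x : ℝ) : ℝ :=
  if x = 0 then 1 / 2 else (1 - cos x) / x ^ 2

lemma oneSubCosDivSq_zero : oneSubCosDivSq 0 = 1 / 2 := if_pos rfl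

lemma abs_oneSubCosDivSq_sub_half_le {x : ℝ} (hx : |x| ≤ 1) :
    |oneSubCosDivSq x - 1 / 2| ≤ 5 / 96 * x ^ 2 := by
  rcases eq_or_ne x 0 with rfl | hx0
  · simp [oneSubCosDivSq_zero]
  have hq : oneSubCosDivSq x - 1 / 2 = -(cos x - (1 - x ^ 2 / 2)) / x ^ 2 := by
    rw [oneSubCosDivSq, if_neg hx0]
    field_simp
    ring
  have hx2 : 0 < x ^ 2 := by positivity
  rw [hq, abs_div, abs_neg, abs_of_pos hx2, div_le_iff₀ hx2]
  calc |cos x - (1 - x ^ 2 / 2)| ≤ |x| ^ 4 * (5 / 96) := cos_bound hx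
    _ = 5 / 96 * x ^ 2 * x ^ 2 := by rw [pow_abs, abs_of_nonneg (by positivity)]; ring

lemma hasDerivAt_oneSubCosDivSq_zero : HasDerivAt oneSubCosDivSq 0 0 := by
  rw [hasDerivAt_iff_isLittleO_nhds_zero]
  have hbound : (fun h : ℝ => oneSubCosDivSq h - 1 / 2) =O[nhds 0] fun h => h ^ 2 := by
    refine IsBigO.of_bound (5 / 96) ?_
    filter_upwards [Metric.closedBall_mem_nhds (0 : ℝ) one_pos] with h hh
    rw [Metric.mem_closedBall, dist_zero_right] at hh
    simpa [abs_of_nonneg (sq_nonneg h)] using abs_oneSubCosDivSq_sub_half_le hh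
  simpa [oneSubCosDivSq_zero] using hbound.trans_isLittleO (isLittleO_pow_id one_lt_two)

noncomputable def betaPlusNum (σ α : ℝ) : ℝ :=
  2 * σ ^ 2 - σ ^ 2 * (cos (α * σ) + cos ((2 - α) * σ))
    - (σ / (1 - α)) * (sin ((2 - 2 * α) * σ) - (sin ((2 - α) * σ) - sin (α * σ)))

noncomputable def betaPlusDen (σ α : ℝ) : ℝ :=
  2 * σ ^ 2 * oneSubCosDivSq (α * σ) * (1 - cos (2 * (1 - α) * σ))

section

variable (σ : ℝ)

lemma betaPlusNum_zero : betaPlusNum σ 0 = σ ^ 2 * (1 - cos (2 * σ)) := by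
  rw [betaPlusNum]
  simp only [zero_mul, sub_zero, mul_zero, cos_zero, sin_zero, div_one]
  ring

lemma betaPlusDen_zero : betaPlusDen σ 0 = σ ^ 2 * (1 - cos (2 * σ)) := by
  rw [betaPlusDen, zero_mul, oneSubCosDivSq_zero, sub_zero, mul_one]
  ring

lemma hasDerivAt_betaPlusNum_zero :
    HasDerivAt (betaPlusNum σ) (-(σ ^ 3 * sin (2 * σ)) - σ ^ 2 * (1 - cos (2 * σ))) 0 := by
  have hA := (hasDerivAt_id' (0 : ℝ)).mul_const σ
  have hB := ((hasDerivAt_id' (0 : ℝ)).const_sub 2).mul_const σ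
  have hC := (((hasDerivAt_id' (0 : ℝ)).const_mul 2).const_sub 2).mul_const σ
  have hfrac := (hasDerivAt_const (0 : ℝ) σ).fun_div ((hasDerivAt_id' (0 : ℝ)).const_sub 1)
    (by norm_num)
  have h := (((hA.cos.fun_add hB.cos).const_mul (σ ^ 2)).const_sub (2 * σ ^ 2)).fun_sub
    (hfrac.fun_mul (hC.sin.fun_sub (hB.sin.fun_sub hA.sin)))
  refine h.congr_deriv ?_
  simp only [mul_zero, sub_zero, zero_mul, cos_zero, sin_zero]
  ring

lemma hasDerivAt_betaPlusDen_zero :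
    HasDerivAt (betaPlusDen σ) (-(2 * σ ^ 3 * sin (2 * σ))) 0 := by
  have hq := hasDerivAt_oneSubCosDivSq_zero.comp_of_eq (x := 0)
    ((hasDerivAt_id' (0 : ℝ)).mul_const σ) (zero_mul σ).symm
  have hE := (((hasDerivAt_id' (0 : ℝ)).const_sub 1).const_mul 2).mul_const σ
  have h := (hq.const_mul (2 * σ ^ 2)).fun_mul (hE.cos.const_sub 1)
  refine h.congr_deriv ?_
  simp only [Function.comp_apply, zero_mul, oneSubCosDivSq_zero, sub_zero, mul_one]
  ring

end

lemma betaPlusZero_eq_div {σ : ℝ} (hσ : σ ≠ 0) (hc : 1 - cos (2 * σ) ≠ 0) :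
    betaPlusZero σ = fun α => betaPlusNum σ α / betaPlusDen σ α := by
  ext α
  rcases eq_or_ne α 0 with rfl | hα
  · rw [betaPlusZero, if_pos rfl, betaPlusNum_zero, betaPlusDen_zero,
      div_self (mul_ne_zero (pow_ne_zero 2 hσ) hc)]
  · rw [betaPlusZero, if_neg hα, betaPlusNum, betaPlusDen, oneSubCosDivSq,
      if_neg (mul_ne_zero hα hσ)]
    field_simp

theorem stmt5_general (σ : ℝ)
    (h1 : Real.sin σ ≠ 0) :
    ContinuousAt (betaPlusZero σ) 0 ∧ betaPlusZero σ 0 = 1 ∧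
      HasDerivAt (betaPlusZero σ) (σ * Real.cot σ - 1) 0 := by
  have hσ : σ ≠ 0 := by rintro rfl; exact h1 sin_zero
  have hc : 1 - cos (2 * σ) = 2 * sin σ ^ 2 := by rw [cos_two_mul, cos_sq']; ring
  have hc0 : 1 - cos (2 * σ) ≠ 0 := by rw [hc]; positivity
  have hderiv : HasDerivAt (betaPlusZero σ) (σ * cot σ - 1) 0 := by
    rw [betaPlusZero_eq_div hσ hc0]
    refine ((hasDerivAt_betaPlusNum_zero σ).fun_div (hasDerivAt_betaPlusDen_zero σ)
      (by rw [betaPlusDen_zero]; positivity)).congr_deriv ?_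
    rw [betaPlusNum_zero, betaPlusDen_zero, cot_eq_cos_div_sin, sin_two_mul, hc]
    field_simp
    ring
  exact ⟨hderiv.continuousAt, if_pos rfl, hderiv⟩

/-- For fixed σ ∈ (0,2π) with sin σ ≠ 0 and sin 2σ ≠ 0, the function β̂₊,₀(α) extends
continuously to α = 0 with value 1, and its derivative in α at α = 0 is σ·cot σ − 1. -/
theorem stmt5 (σ : ℝ) (hσ : σ ∈ Set.Ioo 0 (2 * Real.pi))
    (h1 : Real.sin σ ≠ 0) (h2 : Real.sin (2 * σ) ≠ 0) :
    ContinuousAt (betaPlusZero σ) 0 ∧ betaPlusZero σ 0 = 1 ∧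
      HasDerivAt (betaPlusZero σ) (σ * Real.cot σ - 1) 0 :=
  stmt5_general σ h1
end

section
/- Let k > 0, α real, σ > 0, μ = k+iα, ω = e^{−μσ}, and let q(θ) = α₊ e^{μ(θ−σ)} + α₋ e^{−μθ} with α₊, α₋ ∈ ℂ. Then ∂_θq(σ)·conj(q(σ)) − ∂_θq(0)·conj(q(0)) − ∫₀^σ 2(ikα − α²)|q(θ)|² dθ = ((k²+α²)/k)·(|α₊|² + |α₋|²)·(1 − |ω|²). -/
/-!
Since `q'' = μ² q`, the flux `q' · conj q` has derivative `μ² |q|² + |q'|²`, and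
`2 (ikα - α²) = μ² - |μ|²`. Hence the left-hand side equals `∫₀^σ (|q'|² + |μ|² |q|²)`, which is
real and nonnegative. With `q' = μ (α₊ e^{μ(θ-σ)} - α₋ e^{-μθ})` the parallelogram law turns the
integrand into `2 |μ|² (|α₊|² e^{2k(θ-σ)} + |α₋|² e^{-2kθ})`, an elementary integral.
-/

open Complex ComplexConjugate intervalIntegral Set

theorem deriv_mul_conj_sub_integral_eq_integral_energy {q q' : ℝ → ℂ} {μ : ℂ} {a b : ℝ}
    (hq : ∀ t ∈ uIcc a b, HasDerivAt q (q' t) t)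
    (hq' : ∀ t ∈ uIcc a b, HasDerivAt q' (μ ^ 2 * q t) t) :
    q' b * conj (q b) - q' a * conj (q a)
        - ∫ t in a..b, (μ ^ 2 - ((‖μ‖ ^ 2 : ℝ) : ℂ)) * ((‖q t‖ ^ 2 : ℝ) : ℂ)
      = ((∫ t in a..b, (‖q' t‖ ^ 2 + ‖μ‖ ^ 2 * ‖q t‖ ^ 2) : ℝ) : ℂ) := by
  have hcq : ContinuousOn q (uIcc a b) := fun t ht => (hq t ht).continuousAt.continuousWithinAt
  have hcq' : ContinuousOn q' (uIcc a b) :=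
    fun t ht => (hq' t ht).continuousAt.continuousWithinAt
  have hflux : ∀ t ∈ uIcc a b, HasDerivAt (fun t => q' t * conj (q t))
      (μ ^ 2 * ((‖q t‖ ^ 2 : ℝ) : ℂ) + ((‖q' t‖ ^ 2 : ℝ) : ℂ)) t := by
    intro t ht
    refine ((hq' t ht).mul (hq t ht).star).congr_deriv ?_
    push_cast
    rw [← mul_conj', ← mul_conj']
    simp only [star_def]
    ring
  rw [← integral_eq_sub_of_hasDerivAt hflux, ← integral_sub, ← intervalIntegral.integral_ofReal]
  · congr 1; ext t; push_cast; ring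
  all_goals exact ContinuousOn.intervalIntegrable (by fun_prop)

theorem hasDerivAt_exp_combination (μ a b s : ℂ) (t : ℝ) :
    HasDerivAt (fun t : ℝ => a * cexp (μ * (t - s)) + b * cexp (-(μ * t)))
      (μ * (a * cexp (μ * (t - s)) - b * cexp (-(μ * t)))) t := by
  have hid : HasDerivAt (fun t : ℝ => (t : ℂ)) 1 t := hasDerivAt_id (t : ℂ) |>.comp_ofReal
  have hgrow := (((hid.sub_const s).const_mul μ).cexp).const_mul a
  have hdecay := ((hid.const_mul μ).neg.cexp).const_mul b
  exact (hgrow.add hdecay).congr_deriv (by simp only [Pi.neg_apply]; ring)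

theorem norm_sq_mul_sub_add_norm_sq_mul_add (μ u v : ℂ) :
    ‖μ * (u - v)‖ ^ 2 + ‖μ‖ ^ 2 * ‖u + v‖ ^ 2 = 2 * ‖μ‖ ^ 2 * (‖u‖ ^ 2 + ‖v‖ ^ 2) := by
  linear_combination (norm := (rw [norm_mul]; ring_nf)) ‖μ‖ ^ 2 * parallelogram_law_with_norm ℝ u v

theorem norm_sq_mul_cexp (a z : ℂ) : ‖a * cexp z‖ ^ 2 = ‖a‖ ^ 2 * Real.exp (2 * z.re) := by
  rw [norm_mul, norm_exp, mul_pow, ← Real.exp_nat_mul]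
  norm_num

theorem integral_exp_growth_add_decay {c : ℝ} (hc : c ≠ 0) (A B σ : ℝ) :
    ∫ t in (0 : ℝ)..σ, (A * Real.exp (c * (t - σ)) + B * Real.exp (-(c * t)))
      = (A + B) * (1 - Real.exp (-(c * σ))) / c := by
  have hF : ∀ t : ℝ,
      HasDerivAt (fun t => (A * Real.exp (c * (t - σ)) - B * Real.exp (-(c * t))) / c)
      (A * Real.exp (c * (t - σ)) + B * Real.exp (-(c * t))) t := by
    intro t
    have hgrow := ((((hasDerivAt_id t).sub_const σ).const_mul c).exp).const_mul A
    have hdecay := ((((hasDerivAt_id t).const_mul c).neg).exp).const_mul B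
    refine ((hgrow.sub hdecay).div_const c).congr_deriv ?_
    simp only [Pi.neg_apply, id]
    field_simp
    ring
  have hcont : Continuous fun t => A * Real.exp (c * (t - σ)) + B * Real.exp (-(c * t)) := by
    fun_prop
  rw [integral_eq_sub_of_hasDerivAt (fun t _ => hF t) (hcont.intervalIntegrable _ _)]
  simp only [sub_self, mul_zero, zero_sub, neg_zero, Real.exp_zero]
  field_simp
  ring

theorem stmt10_general (k α σ : ℝ) (hk : 0 < k) (ap am : ℂ) :
    let μ : ℂ := (k : ℂ) + Complex.I * (α : ℂ)
    let q : ℝ → ℂ := fun θ =>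
      ap * Complex.exp (μ * ((θ : ℂ) - (σ : ℂ))) + am * Complex.exp (-(μ * (θ : ℂ)))
    deriv q σ * (starRingEnd ℂ) (q σ) - deriv q 0 * (starRingEnd ℂ) (q 0)
        - ∫ θ in (0 : ℝ)..σ,
            2 * (Complex.I * (k : ℂ) * (α : ℂ) - (α : ℂ) ^ 2) * ((‖q θ‖ ^ 2 : ℝ) : ℂ)
      = (((k ^ 2 + α ^ 2) / k * (‖ap‖ ^ 2 + ‖am‖ ^ 2) * (1 - Real.exp (-2 * k * σ)) : ℝ) : ℂ) := by
  intro μ q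
  set q' : ℝ → ℂ := fun t => μ * (ap * cexp (μ * (t - σ)) - am * cexp (-(μ * t)))
  have hq : ∀ t : ℝ, HasDerivAt q (q' t) t := hasDerivAt_exp_combination μ ap am σ
  have hq' : ∀ t : ℝ, HasDerivAt q' (μ ^ 2 * q t) t := fun t =>
    ((hasDerivAt_exp_combination μ (μ * ap) (-(μ * am)) σ t).congr_deriv (by ring))
      |>.congr_of_eventuallyEq (.of_forall fun t => by simp only [q']; ring)
  have hμ : ‖μ‖ ^ 2 = k ^ 2 + α ^ 2 := by
    rw [← normSq_eq_norm_sq, show μ = k + α * I by ring, normSq_add_mul_I]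
  have hcoef : 2 * (I * k * α - (α : ℂ) ^ 2) = μ ^ 2 - ((‖μ‖ ^ 2 : ℝ) : ℂ) := by
    rw [hμ]; push_cast; linear_combination (-(α : ℂ) ^ 2) * I_sq
  have henergy : ∀ t : ℝ, ‖q' t‖ ^ 2 + ‖μ‖ ^ 2 * ‖q t‖ ^ 2
      = 2 * ‖μ‖ ^ 2
          * (‖ap‖ ^ 2 * Real.exp (2 * k * (t - σ)) + ‖am‖ ^ 2 * Real.exp (-(2 * k * t))) := by
    intro t
    rw [norm_sq_mul_sub_add_norm_sq_mul_add, norm_sq_mul_cexp, norm_sq_mul_cexp]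
    have hgrow : 2 * (μ * (t - σ)).re = 2 * k * (t - σ) := by simp [μ]; ring
    have hdecay : 2 * (-(μ * t)).re = -(2 * k * t) := by simp [μ]; ring
    rw [hgrow, hdecay]
  rw [(hq σ).deriv, (hq 0).deriv, hcoef,
    deriv_mul_conj_sub_integral_eq_integral_energy (fun t _ => hq t) (fun t _ => hq' t)]
  simp_rw [henergy]
  rw [integral_const_mul, integral_exp_growth_add_decay (by positivity), hμ]
  congr 1
  field_simp

/-- The boundary-term identity for the Fourier-space Stokes pressure energy:
∂_θq(σ)·conj q(σ) − ∂_θq(0)·conj q(0) − ∫₀^σ 2(ikα−α²)|q|² dθ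
 = ((k²+α²)/k)(|α₊|²+|α₋|²)(1−e^{−2kσ}). -/
theorem stmt10 (k α σ : ℝ) (hk : 0 < k) (hσ : 0 < σ) (ap am : ℂ) :
    let μ : ℂ := (k : ℂ) + Complex.I * (α : ℂ)
    let q : ℝ → ℂ := fun θ =>
      ap * Complex.exp (μ * ((θ : ℂ) - (σ : ℂ))) + am * Complex.exp (-(μ * (θ : ℂ)))
    deriv q σ * (starRingEnd ℂ) (q σ) - deriv q 0 * (starRingEnd ℂ) (q 0)
        - ∫ θ in (0 : ℝ)..σ,
            2 * (Complex.I * (k : ℂ) * (α : ℂ) - (α : ℂ) ^ 2) * ((‖q θ‖ ^ 2 : ℝ) : ℂ)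
      = (((k ^ 2 + α ^ 2) / k * (‖ap‖ ^ 2 + ‖am‖ ^ 2) * (1 - Real.exp (-2 * k * σ)) : ℝ) : ℂ) :=
  stmt10_general k α σ hk ap am
end
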